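/- Let G be a graph and suppose MH_{k,l}(G) ≠ 0. Then k ≤ l. If moreover G is connected with finite diameter d, then l/d ≤ k; and if additionally d > 1 and l > 0, then the strict inequality l/d < k holds. -/

import Mathlib

/-!
Each of the `k` gaps of a generator of `MC_{k,l}(G)` has length between `1` and the diameter
`d`, so `k ≤ l ≤ k d`. In the extremal case `l = k d` with `d ≥ 2` every gap has length `d`.
Inserting after `x₀` a neighbour `y` of `x₀` on a geodesic to `x₁` gives a generator `z` of
`MC_{k+1,l}(G)`; deleting `y` is its only length-preserving face, so `∂z = -x`. Hence
`∂ : MC_{k+1,l} → MC_{k,l}` is onto and `MH_{k,l}(G) = 0`.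
-/

noncomputable section

namespace MagnitudeHomology

open Classical

variable {V : Type*} {W : Type*}

/-- The length `ℓ(x₀,…,x_k)` of a tuple of vertices: the sum of consecutive
(extended) shortest-path distances. -/
def tupleLen (G : SimpleGraph V) {k : ℕ} (x : Fin (k + 1) → V) : ℕ∞ :=
  ∑ i : Fin k, G.edist (x i.castSucc) (x i.succ)

/-- The condition defining the generators of `MC_{k,l}(G)`: consecutive entries
distinct and total length `l`. -/
def IsMagTuple (G : SimpleGraph V) (l : ℕ) {k : ℕ} (x : Fin (k + 1) → V) : Prop :=
  (∀ i : Fin k, x i.castSucc ≠ x i.succ) ∧ tupleLen G x = (l : ℕ∞)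

/-- The generating tuples of the magnitude chain group `MC_{k,l}(G)`. -/
def MagTuple (G : SimpleGraph V) (k l : ℕ) : Type _ :=
  {x : Fin (k + 1) → V // IsMagTuple G l x}

/-- The magnitude chain group `MC_{k,l}(G)`: the free abelian group on tuples
`(x₀,…,x_k)` with consecutive entries distinct and length `l`. -/
def MC (G : SimpleGraph V) (k l : ℕ) : Type _ :=
  FreeAbelianGroup (MagTuple G k l)

instance (G : SimpleGraph V) (k l : ℕ) : AddCommGroup (MC G k l) :=
  inferInstanceAs (AddCommGroup (FreeAbelianGroup _))

/-- The generator of `MC_{k,l}(G)` corresponding to a tuple, or `0` if the tuple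
does not satisfy the defining conditions. -/
def mcGen (G : SimpleGraph V) {k : ℕ} (l : ℕ) (x : Fin (k + 1) → V) : MC G k l :=
  if h : IsMagTuple G l x then FreeAbelianGroup.of (⟨x, h⟩ : MagTuple G k l) else 0

/-- The magnitude differential `∂ = ∑_{i=1}^{k} (-1)^i ∂_i : MC_{k+1,l}(G) → MC_{k,l}(G)`,
where `∂_i` omits the `i`-th entry if this preserves the length, and is `0` otherwise. -/
def magDiff (G : SimpleGraph V) (k l : ℕ) : MC G (k + 1) l →+ MC G k l :=
  FreeAbelianGroup.lift fun (x : MagTuple G (k + 1) l) =>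
    ∑ i : Fin k, ((-1 : ℤ) ^ ((i : ℕ) + 1)) •
      mcGen G l (x.1 ∘ Fin.succAbove i.succ.castSucc)

/-- The subgroup of cycles: everything in degree `0`, the kernel of `∂` in
positive degrees. -/
def magCycles (G : SimpleGraph V) (l : ℕ) : (k : ℕ) → AddSubgroup (MC G k l)
  | 0 => ⊤
  | (k + 1) => (magDiff G k l).ker

/-- The boundaries, viewed as a subgroup of the cycles. -/
def magBoundaries (G : SimpleGraph V) (k l : ℕ) : AddSubgroup (magCycles G l k) :=
  ((magDiff G k l).range).addSubgroupOf (magCycles G l k)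

/-- Magnitude homology `MH_{k,l}(G) = H_k(MC_{*,l}(G))`. -/
def MH (G : SimpleGraph V) (k l : ℕ) : Type _ :=
  magCycles G l k ⧸ magBoundaries G k l

instance (G : SimpleGraph V) (k l : ℕ) : AddCommGroup (MH G k l) :=
  inferInstanceAs (AddCommGroup (_ ⧸ _))

/-- The homology class of a chain: its class if it is a cycle, `0` otherwise. -/
def mkMH (G : SimpleGraph V) (k l : ℕ) (z : MC G k l) : MH G k l :=
  if h : z ∈ magCycles G l k then QuotientAddGroup.mk ⟨z, h⟩ else 0

section

open SimpleGraph

variable {G : SimpleGraph V}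

lemma exists_adj_edist_eq_of_edist_eq_add_one {u v : V} {d : ℕ}
    (h : G.edist u v = ((d + 1 : ℕ) : ℕ∞)) : ∃ y, G.Adj u y ∧ G.edist y v = d := by
  obtain ⟨p, hp⟩ := exists_walk_of_edist_eq_coe h
  cases p with
  | nil => simp at hp
  | @cons _ y _ hadj q =>
    refine ⟨y, hadj, le_antisymm ?_ ?_⟩
    · simp only [Walk.length_cons, add_left_inj] at hp
      exact hp ▸ edist_le q
    · have htri : G.edist u v ≤ G.edist u y + G.edist y v := G.edist_triangle
      rw [h, edist_eq_one_iff_adj.mpr hadj, Nat.cast_add, Nat.cast_one, add_comm] at htri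
      exact (WithTop.add_le_add_iff_left ENat.one_ne_top).mp htri

lemma edist_le_diam (hG : G.ediam ≠ ⊤) (u v : V) : G.edist u v ≤ G.diam := by
  rw [diam, ENat.natCast_toNat hG]
  exact edist_le_ediam

lemma tupleLen_eq_edist_add_tail {k : ℕ} (x : Fin (k + 2) → V) :
    tupleLen G x = G.edist (x 0) (x 1) + tupleLen G (Fin.tail x) := by
  simp only [tupleLen, Fin.sum_univ_succ, Fin.tail, Fin.succ_castSucc]
  rfl

lemma tupleLen_le_mul {k : ℕ} {D : ℕ∞} (hD : ∀ u v, G.edist u v ≤ D)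
    (x : Fin (k + 1) → V) : tupleLen G x ≤ k * D :=
  calc tupleLen G x ≤ ∑ _i : Fin k, D := Finset.sum_le_sum fun _ _ => hD _ _
    _ = k * D := by simp

lemma le_tupleLen {k : ℕ} {x : Fin (k + 1) → V}
    (hx : ∀ i : Fin k, x i.castSucc ≠ x i.succ) : (k : ℕ∞) ≤ tupleLen G x :=
  calc (k : ℕ∞) = ∑ _i : Fin k, 1 := by simp
    _ ≤ tupleLen G x :=
      Finset.sum_le_sum fun i _ => Order.one_le_iff_pos.mpr (G.edist_pos_of_ne (hx i))

namespace IsMagTuple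

variable {k l : ℕ} {x : Fin (k + 1) → V}

lemma le (hx : IsMagTuple G l x) : k ≤ l := by
  exact_mod_cast hx.2 ▸ le_tupleLen hx.1

lemma le_mul_diam (hG : G.ediam ≠ ⊤) (hx : IsMagTuple G l x) : l ≤ k * G.diam := by
  exact_mod_cast hx.2 ▸ tupleLen_le_mul (edist_le_diam hG) x

end IsMagTuple

lemma magDiff_of {k l : ℕ} (x : MagTuple G (k + 1) l) :
    magDiff G k l (FreeAbelianGroup.of x) =
      ∑ i : Fin k,
        ((-1 : ℤ) ^ ((i : ℕ) + 1)) • mcGen G l (x.1 ∘ Fin.succAbove i.succ.castSucc) :=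
  FreeAbelianGroup.lift_apply_of _ _

lemma mcGen_of_isMagTuple {k l : ℕ} {x : Fin (k + 1) → V} (hx : IsMagTuple G l x) :
    mcGen G l x = FreeAbelianGroup.of ⟨x, hx⟩ :=
  dif_pos hx

lemma mcGen_of_tupleLen_ne {k l : ℕ} {x : Fin (k + 1) → V} (hx : tupleLen G x ≠ l) :
    mcGen G l x = 0 :=
  dif_neg fun h => hx h.2

lemma nonempty_magTuple_of_nontrivial {k l : ℕ} (h : Nontrivial (MH G k l)) :
    Nonempty (MagTuple G k l) := by
  by_contra hempty
  have : IsEmpty (MagTuple G k l) := not_nonempty_iff.mp hempty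
  have : Subsingleton (MC G k l) := inferInstanceAs (Subsingleton (FreeAbelianGroup _))
  exact not_subsingleton (MH G k l) (Quotient.instSubsingletonQuotient _)

lemma subsingleton_MH_of_surjective {k l : ℕ} (h : Function.Surjective (magDiff G k l)) :
    Subsingleton (MH G k l) := by
  have hb : magBoundaries G k l = ⊤ := by
    rw [magBoundaries, AddMonoidHom.range_eq_top.mpr h]
    exact AddSubgroup.addSubgroupOf_eq_top.mpr le_top
  unfold MH
  rw [hb]
  exact QuotientAddGroup.subsingleton_quotient_top

lemma insertNth_one_eq_cons {α : Type*} {k : ℕ} (x : Fin (k + 2) → α) (y : α) :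
    (Fin.insertNth 1 y x : Fin (k + 3) → α) = Fin.cons (x 0) (Fin.cons y (Fin.tail x)) := by
  rw [← Fin.cons_self_tail x, ← Fin.succ_zero_eq_one, Fin.insertNth_succ_cons,
    Fin.insertNth_zero']
  rfl

lemma IsMagTuple.insertNth_one {k l : ℕ} {x : Fin (k + 2) → V} (hx : IsMagTuple G l x) {y : V}
    (hy₀ : x 0 ≠ y) (hy₁ : y ≠ x 1)
    (hy : G.edist (x 0) y + G.edist y (x 1) = G.edist (x 0) (x 1)) :
    IsMagTuple G l (Fin.insertNth 1 y x) := by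
  rw [insertNth_one_eq_cons]
  refine ⟨fun i => ?_, ?_⟩
  · induction i using Fin.cases with
    | zero => exact hy₀
    | succ j =>
      induction j using Fin.cases with
      | zero => exact hy₁
      | succ j => simpa [Fin.tail, ← Fin.succ_castSucc] using hx.1 j.succ
  · rw [← hx.2, tupleLen_eq_edist_add_tail, tupleLen_eq_edist_add_tail,
      tupleLen_eq_edist_add_tail x, ← hy]
    exact (add_assoc _ _ _).symm

section Diameter

variable {m : ℕ}

lemma edist_zero_one_eq_diam (hG : G.ediam ≠ ⊤) {x : Fin (m + 2) → V}
    (hx : tupleLen G x = ((m + 1) * G.diam : ℕ)) : G.edist (x 0) (x 1) = G.diam := by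
  rw [tupleLen_eq_edist_add_tail] at hx
  have h₀ := edist_le_diam hG (x 0) (x 1)
  have htail := tupleLen_le_mul (edist_le_diam hG) (Fin.tail x)
  have hfin : (m : ℕ∞) * G.diam ≠ ⊤ :=
    WithTop.mul_ne_top (ENat.natCast_ne_top _) (ENat.natCast_ne_top _)
  lift G.edist (x 0) (x 1) to ℕ using ne_top_of_le_ne_top (ENat.natCast_ne_top _) h₀ with e
  lift tupleLen G (Fin.tail x) to ℕ using ne_top_of_le_ne_top hfin htail with s
  norm_cast at *
  rw [Nat.succ_mul] at hx
  omega

lemma tupleLen_lt_of_adj (hd : 1 < G.diam) {w : Fin (m + 2) → V} (hw : G.Adj (w 0) (w 1)) :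
    tupleLen G w < ((m + 1) * G.diam : ℕ) := by
  have hG := ediam_ne_top_of_diam_ne_zero (by omega : G.diam ≠ 0)
  rw [tupleLen_eq_edist_add_tail, edist_eq_one_iff_adj.mpr hw]
  calc 1 + tupleLen G (Fin.tail w) ≤ 1 + m * G.diam :=
        add_le_add_right (tupleLen_le_mul (edist_le_diam hG) _) 1
    _ < ((m + 1) * G.diam : ℕ) := by
        norm_cast
        rw [Nat.succ_mul]
        omega

lemma exists_magDiff_eq_neg_of (hd : 1 < G.diam) (x : MagTuple G (m + 1) ((m + 1) * G.diam)) :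
    ∃ z, magDiff G (m + 1) _ (FreeAbelianGroup.of z : MC G _ _) = -FreeAbelianGroup.of x := by
  have hG := ediam_ne_top_of_diam_ne_zero (by omega : G.diam ≠ 0)
  have hx₀₁ := edist_zero_one_eq_diam hG x.2.2
  obtain ⟨y, hadj, hy⟩ := exists_adj_edist_eq_of_edist_eq_add_one (d := G.diam - 1)
    (by rw [hx₀₁, Nat.sub_add_cancel hd.le])
  have hyx : y ≠ x.1 1 := by
    rintro rfl
    rw [edist_self] at hy
    norm_cast at hy
    omega
  have hz := x.2.insertNth_one hadj.ne hyx (by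
    rw [edist_eq_one_iff_adj.mpr hadj, hy, hx₀₁]
    norm_cast
    omega)
  refine ⟨⟨_, hz⟩, (magDiff_of _).trans ?_⟩
  rw [Fin.sum_univ_succ, Finset.sum_eq_zero]
  · simp only [Fin.val_zero, zero_add, pow_one, Fin.succ_zero_eq_one, Fin.castSucc_one,
      Fin.insertNth_comp_succAbove, mcGen_of_isMagTuple x.2, add_zero]
    exact neg_one_zsmul _
  · -- every other face keeps the gap `x₀ y` of length `1 < diam`, so it is too short
    intro j _
    rw [mcGen_of_tupleLen_ne, smul_zero]
    refine (tupleLen_lt_of_adj hd ?_).ne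
    simpa [insertNth_one_eq_cons] using hadj

lemma magDiff_surjective (hd : 1 < G.diam) :
    Function.Surjective (magDiff G (m + 1) ((m + 1) * G.diam)) := by
  refine fun c => FreeAbelianGroup.induction_on (motive := (· ∈ (magDiff G _ _).range)) c
    (zero_mem _) (fun x => ?_) (fun _ => neg_mem) (fun _ _ => add_mem)
  obtain ⟨z, hz⟩ := exists_magDiff_eq_neg_of hd x
  exact ⟨_, (map_neg (magDiff G _ _) (FreeAbelianGroup.of z)).trans (neg_eq_iff_eq_neg.mpr hz)⟩

lemma subsingleton_MH_of_eq_mul_diam {k l : ℕ} (hd : 1 < G.diam) (hk : k ≠ 0)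
    (hl : l = k * G.diam) : Subsingleton (MH G k l) := by
  obtain ⟨m, rfl⟩ := Nat.exists_eq_succ_of_ne_zero hk
  subst hl
  exact subsingleton_MH_of_surjective (magDiff_surjective hd)

end Diameter

end

theorem MH_support_bounds_general {V : Type*} (G : SimpleGraph V) (k l : ℕ)
    (h : Nontrivial (MH G k l)) :
    k ≤ l ∧
      (G.Connected →
        ((l : ℝ) / (G.diam : ℝ) ≤ (k : ℝ) ∧
          (1 < G.diam → 0 < l → (l : ℝ) / (G.diam : ℝ) < (k : ℝ)))) := by
  obtain ⟨⟨x, hx⟩⟩ := nonempty_magTuple_of_nontrivial h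
  refine ⟨hx.le, fun _ => ⟨?_, fun hd hl => ?_⟩⟩
  · rcases Nat.eq_zero_or_pos G.diam with h0 | hpos
    · simp [h0]
    · rw [div_le_iff₀ (by exact_mod_cast hpos)]
      exact_mod_cast hx.le_mul_diam (SimpleGraph.ediam_ne_top_of_diam_ne_zero hpos.ne')
  · have hle := hx.le_mul_diam (SimpleGraph.ediam_ne_top_of_diam_ne_zero (by omega))
    have hlt : l < k * G.diam := hle.lt_of_ne fun heq =>
      not_subsingleton (MH G k l) (subsingleton_MH_of_eq_mul_diam hd (by rintro rfl; omega) heq)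
    rw [div_lt_iff₀ (by positivity)]
    exact_mod_cast hlt

/-- If `MH_{k,l}(G) ≠ 0` then `k ≤ l`; if moreover `G` is connected
with (finite) diameter `d`, then `l/d ≤ k`, and if additionally `d > 1` and `l > 0`
then `l/d < k`. -/
theorem MH_support_bounds {V : Type*} [Fintype V] (G : SimpleGraph V) (k l : ℕ)
    (h : Nontrivial (MH G k l)) :
    k ≤ l ∧
      (G.Connected →
        ((l : ℝ) / (G.diam : ℝ) ≤ (k : ℝ) ∧
          (1 < G.diam → 0 < l → (l : ℝ) / (G.diam : ℝ) < (k : ℝ)))) :=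
  MH_support_bounds_general G k l h

end MagnitudeHomology
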